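/- arXiv:1206.5068 — 6 statements merged into one kernel-verified Lean document; each statement's English description precedes it below -/
import Mathlib

section
/- For the case n = 1: if f(z) = ∑_{m≥1} c_m e^{2πimz} is holomorphic on the upper half-plane with c_m = O(m^M), and the integral ∫_{i∞}^0 f(z) z^{s-1} dz converges (taken along the imaginary axis), then for Re(s) > M + 1 it equals -Γ(s) · (-2πi)^{-s} ∑_{m≥1} c_m m^{-s}. -/
open Complex Asymptotics Filter Set MeasureTheory
open scoped Real

/-!
On the imaginary axis `f (t * I) = ∑ c m * exp (-2π m t)`, and
`(t * I) ^ (s - 1) * I = t ^ (s - 1) * I ^ s`, so the integral is `I ^ s` times the Mellin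
transform of `t ↦ f (t * I)`. Integrating termwise (`hasSum_mellin`, legitimate since
`∑ ‖c m‖ (2π m) ^ (-Re s)` converges for `Re s > M + 1`) gives `Γ(s) c m (2π m) ^ (-s)`, and
`I ^ s (2π) ^ (-s) = (-2π I) ^ (-s)` because `-I` has argument `-π/2`.
-/

lemma Complex.ofReal_mul_cpow {r : ℝ} (hr : 0 ≤ r) (z w : ℂ) :
    ((r : ℂ) * z) ^ w = (r : ℂ) ^ w * z ^ w := by
  rcases hr.eq_or_lt with rfl | hr
  · rcases eq_or_ne w 0 with rfl | hw <;> simp [zero_cpow, *]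
  rcases eq_or_ne z 0 with rfl | hz
  · rcases eq_or_ne w 0 with rfl | hw <;> simp [zero_cpow, *]
  have hr' : (r : ℂ) ≠ 0 := ofReal_ne_zero.mpr hr.ne'
  rw [cpow_def_of_ne_zero (mul_ne_zero hr' hz), cpow_def_of_ne_zero hr', cpow_def_of_ne_zero hz,
    log_ofReal_mul hr hz, add_mul, exp_add, ofReal_log hr.le]

lemma Complex.neg_I_cpow_neg (s : ℂ) : (-I) ^ (-s) = I ^ s := by
  rw [cpow_def_of_ne_zero (neg_ne_zero.mpr I_ne_zero), cpow_def_of_ne_zero I_ne_zero, log_neg_I,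
    log_I]
  ring_nf

lemma I_cpow_div_two_pi_mul_cpow (x : ℝ) (s : ℂ) :
    I ^ s / ((2 * π * x : ℝ) : ℂ) ^ s = (-(2 * π * I)) ^ (-s) * (x : ℂ) ^ (-s) := by
  have h2π : (0 : ℝ) ≤ 2 * π := by positivity
  have hneg : -(2 * π * I) = ((2 * π : ℝ) : ℂ) * -I := by push_cast; ring
  rw [hneg, ofReal_mul_cpow h2π, neg_I_cpow_neg, ofReal_mul (2 * π) x, ofReal_mul_cpow h2π,
    cpow_neg, cpow_neg]
  ring

lemma integral_comp_mul_I_mul_cpow (g : ℂ → ℂ) (s : ℂ) :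
    ∫ t in Ioi (0 : ℝ), g (t * I) * (t * I) ^ (s - 1) * I =
      I ^ s * mellin (fun t : ℝ => g (t * I)) s := by
  rw [mellin, ← integral_const_mul]
  refine setIntegral_congr_fun measurableSet_Ioi fun t ht => ?_
  rw [ofReal_mul_cpow (le_of_lt ht), cpow_sub _ _ I_ne_zero, cpow_one, smul_eq_mul]
  field_simp

lemma isBigO_rpow_pow_ceil_atTop (M : ℝ) :
    (fun m : ℕ => (m : ℝ) ^ M) =O[atTop] fun m : ℕ => (m : ℝ) ^ ⌈M⌉₊ := by
  refine IsBigO.of_bound 1 (eventually_atTop.2 ⟨1, fun m hm => ?_⟩)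
  have hm : (1 : ℝ) ≤ m := by exact_mod_cast hm
  rw [one_mul, Real.norm_of_nonneg (by positivity), Real.norm_of_nonneg (by positivity),
    ← Real.rpow_natCast]
  exact Real.rpow_le_rpow_of_exponent_le hm (Nat.le_ceil M)

section CoefficientGrowth

variable {c : ℕ → ℂ} {M : ℝ}

lemma summable_mul_pow_of_isBigO_rpow (hc : c =O[atTop] fun m : ℕ => (m : ℝ) ^ M) {r : ℝ}
    (hr : ‖r‖ < 1) : Summable fun m : ℕ => c m * (r ^ m : ℝ) := by
  refine summable_of_isBigO_nat (summable_pow_mul_geometric_of_norm_lt_one ⌈M⌉₊ hr) ?_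
  refine (hc.trans (isBigO_rpow_pow_ceil_atTop M)).mul (isBigO_of_le _ fun m => ?_)
  simp

lemma summable_norm_div_rpow_of_isBigO_rpow
    (hc : c =O[atTop] fun m : ℕ => (m : ℝ) ^ M) {σ : ℝ} (hσ : M + 1 < σ) :
    Summable fun m : ℕ => ‖c m‖ / (m : ℝ) ^ σ := by
  refine summable_of_isBigO_nat (Real.summable_nat_rpow.mpr (show M - σ < -1 by linarith)) ?_
  simp only [Real.rpow_sub' (Nat.cast_nonneg _) (show M - σ ≠ 0 by linarith), div_eq_mul_inv]
  exact hc.norm_left.mul (isBigO_refl _ _)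

lemma summable_norm_div_two_pi_mul_rpow
    (hc : c =O[atTop] fun m : ℕ => (m : ℝ) ^ M) {σ : ℝ} (hσ : M + 1 < σ) :
    Summable fun m : ℕ+ => ‖c m‖ / (2 * π * (m : ℕ)) ^ σ := by
  refine ((summable_norm_div_rpow_of_isBigO_rpow hc hσ).div_const ((2 * π) ^ σ)).comp_injective
    PNat.coe_injective |>.congr fun m => ?_
  have h2π : (0 : ℝ) ≤ 2 * π := by positivity
  simp only [Function.comp_apply, Real.mul_rpow h2π m.val.cast_nonneg]
  ring

lemma hasSum_fourier_imaginaryAxis {f : ℂ → ℂ}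
    (hc : c =O[atTop] fun m : ℕ => (m : ℝ) ^ M)
    (hf : ∀ z : ℂ, 0 < z.im →
      f z = ∑' m : ℕ+, c m * exp (2 * π * I * (m : ℂ) * z))
    {t : ℝ} (ht : 0 < t) :
    HasSum (fun m : ℕ+ => c m * (Real.exp (-(2 * π * (m : ℕ)) * t) : ℂ)) (f (t * I)) := by
  have hterm (m : ℕ+) : c m * exp (2 * π * I * (m : ℂ) * (t * I)) =
      c m * (Real.exp (-(2 * π * (m : ℕ)) * t) : ℂ) := by
    have hexponent : 2 * π * I * (m : ℂ) * (t * I) = -(2 * π * (m : ℂ)) * t := by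
      linear_combination (2 * π * (m : ℂ) * t) * I_sq
    rw [hexponent, ofReal_exp]
    push_cast
    rfl
  have hr : ‖Real.exp (-(2 * π * t))‖ < 1 := by
    rw [Real.norm_of_nonneg (Real.exp_nonneg _), Real.exp_lt_one_iff]
    nlinarith [Real.pi_pos]
  have hsum : Summable fun m : ℕ+ => c m * (Real.exp (-(2 * π * (m : ℕ)) * t) : ℂ) := by
    refine ((summable_mul_pow_of_isBigO_rpow hc hr).comp_injective PNat.coe_injective).congr
      fun m => ?_
    rw [Function.comp_apply, ← Real.exp_nat_mul]
    ring_nf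
  rw [hf _ (by simpa), tsum_congr hterm]
  exact hsum.hasSum

end CoefficientGrowth

theorem mellin_transform_cusp_form_general
    (f : ℂ → ℂ) (c : ℕ → ℂ) (C M : ℝ) (hM : 0 < M)
    (hb : ∀ m : ℕ, 1 ≤ m → ‖c m‖ ≤ C * (m : ℝ) ^ M)
    (hf : ∀ z : ℂ, 0 < z.im →
      f z = ∑' m : ℕ+, c m * Complex.exp (2 * Real.pi * Complex.I * (m : ℂ) * z))
    (s : ℂ) (hs : M + 1 < s.re) :
    -(∫ t in Set.Ioi (0 : ℝ),
        f ((t : ℂ) * Complex.I) * ((t : ℂ) * Complex.I) ^ (s - 1) * Complex.I)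
      = -(Complex.Gamma s * (-(2 * Real.pi * Complex.I)) ^ (-s) *
          ∑' m : ℕ+, c m * ((m : ℕ) : ℂ) ^ (-s)) := by
  have hc : c =O[atTop] fun m : ℕ => (m : ℝ) ^ M :=
    IsBigO.of_bound C (eventually_atTop.2 ⟨1, fun m hm => by
      rw [Real.norm_of_nonneg (by positivity)]; exact hb m hm⟩)
  have hmellin := hasSum_mellin (p := fun m : ℕ+ => 2 * π * (m : ℕ))
    (fun m => Or.inr (by positivity)) (by linarith)
    (fun t ht => hasSum_fourier_imaginaryAxis hc hf ht)
    (summable_norm_div_two_pi_mul_rpow hc hs)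
  rw [integral_comp_mul_I_mul_cpow, ← hmellin.tsum_eq, ← tsum_mul_left, ← tsum_mul_left]
  congr 1
  refine tsum_congr fun m => ?_
  linear_combination (Gamma s * c m) * I_cpow_div_two_pi_mul_cpow (m : ℕ) s

/-- n = 1 Mellin transform: for f(z) = ∑_{m≥1} c_m e^{2πimz} with
c_m = O(m^M), and Re(s) > M+1, the convergent integral ∫_{i∞}^0 f(z) z^{s-1} dz
(along the imaginary axis, z = it) equals -Γ(s)·(-2πi)^{-s} ∑ c_m m^{-s}. -/
theorem mellin_transform_cusp_form
    (f : ℂ → ℂ) (c : ℕ → ℂ) (C M : ℝ) (hC : 0 < C) (hM : 0 < M)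
    (hb : ∀ m : ℕ, 1 ≤ m → ‖c m‖ ≤ C * (m : ℝ) ^ M)
    (hf : ∀ z : ℂ, 0 < z.im →
      f z = ∑' m : ℕ+, c m * Complex.exp (2 * Real.pi * Complex.I * (m : ℂ) * z))
    (s : ℂ) (hs : M + 1 < s.re)
    (hint : MeasureTheory.IntegrableOn
      (fun t : ℝ => f ((t : ℂ) * Complex.I) * ((t : ℂ) * Complex.I) ^ (s - 1))
      (Set.Ioi 0)) :
    -(∫ t in Set.Ioi (0 : ℝ),
        f ((t : ℂ) * Complex.I) * ((t : ℂ) * Complex.I) ^ (s - 1) * Complex.I)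
      = -(Complex.Gamma s * (-(2 * Real.pi * Complex.I)) ^ (-s) *
          ∑' m : ℕ+, c m * ((m : ℕ) : ℂ) ^ (-s)) :=
  mellin_transform_cusp_form_general f c C M hM hb hf s hs
end

section
/- Let f : ℍ → ℂ be given by an absolutely convergent series f(z) = ∑_{m≥1} a_m e^{2πimz} with |a_m| ≤ C m^M. Then for Re(s) > M+1, ∫_0^∞ f(it) t^{s-1} dt = Γ(s) (2π)^{-s} ∑_{m≥1} a_m m^{-s}, with both sides converging absolutely. -/
/-!
On the imaginary axis, `f (t * I) = ∑ a_m exp (-2π m t)`, and the Mellin transform of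
`exp (-p t)` is `Γ(s) p^(-s)`. Since `∫ ‖t^(s-1) a_m exp (-2π m t)‖ = Γ(Re s) ‖a_m‖ (2π m)^(-Re s)` is
summable for `Re s > M + 1`, the series may be integrated term by term.
-/

open Filter Real Set MeasureTheory Complex

namespace MeasureTheory

variable {ι α E : Type*} [Countable ι] [MeasurableSpace α] {μ : Measure α}
  [NormedAddCommGroup E] [CompleteSpace E]

theorem integrable_tsum_of_summable_integral_norm {F : ι → α → E}
    (hF_int : ∀ i, Integrable (F i) μ) (hF_sum : Summable fun i ↦ ∫ a, ‖F i a‖ ∂μ) :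
    Integrable (fun a ↦ ∑' i, F i a) μ := by
  have h_meas i : AEMeasurable (fun a ↦ ‖F i a‖ₑ) μ := (hF_int i).1.enorm
  have h_lint : ∑' i, ∫⁻ a, ‖F i a‖ₑ ∂μ ≠ ⊤ := by
    simp_rw [← ofReal_integral_norm_eq_lintegral_enorm (hF_int _),
      ← ENNReal.ofReal_tsum_of_nonneg (fun i ↦ integral_nonneg fun _ ↦ norm_nonneg _) hF_sum]
    exact ENNReal.ofReal_ne_top
  have h_summable : ∀ᵐ a ∂μ, HasSum (fun i ↦ F i a) (∑' i, F i a) := by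
    rw [← lintegral_tsum h_meas] at h_lint
    filter_upwards [ae_lt_top' (AEMeasurable.tsum h_meas) h_lint] with a ha
    exact (tsum_enorm_ne_top_iff_summable_norm.1 ha.ne).of_norm.hasSum
  refine ⟨aestronglyMeasurable_of_tendsto_ae atTop
    (fun s ↦ Finset.aestronglyMeasurable_fun_sum s fun i _ ↦ (hF_int i).1) h_summable, ?_⟩
  calc ∫⁻ a, ‖∑' i, F i a‖ₑ ∂μ ≤ ∫⁻ a, ∑' i, ‖F i a‖ₑ ∂μ :=
        lintegral_mono fun _ ↦ enorm_tsum_le_tsum_enorm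
    _ = ∑' i, ∫⁻ a, ‖F i a‖ₑ ∂μ := lintegral_tsum h_meas
    _ < ⊤ := h_lint.lt_top

end MeasureTheory

lemma mellinConvergent_exp_neg_mul {p : ℝ} (hp : 0 < p) {s : ℂ} (hs : 0 < s.re) :
    MellinConvergent (fun t : ℝ ↦ (rexp (-p * t) : ℂ)) s := by
  have h : MellinConvergent (fun t : ℝ ↦ (rexp (-t) : ℂ)) s :=
    (Complex.GammaIntegral_convergent hs).congr_fun
      (fun t _ ↦ by simp only [smul_eq_mul, ofReal_exp, ofReal_neg, mul_comm]) measurableSet_Ioi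
  simpa only [neg_mul] using (MellinConvergent.comp_mul_left hp).2 h

lemma integral_norm_cpow_mul_exp_neg_mul {p : ℝ} (hp : 0 < p) {s : ℂ} (hs : 0 < s.re) :
    ∫ t : ℝ in Ioi 0, ‖(t : ℂ) ^ (s - 1) * rexp (-p * t)‖ = Real.Gamma s.re / p ^ s.re := by
  rw [div_eq_inv_mul, ← inv_rpow hp.le, ← one_div, ← Real.integral_rpow_mul_exp_neg_mul_Ioi hs hp]
  refine setIntegral_congr_fun measurableSet_Ioi fun t ht ↦ ?_
  rw [norm_mul, norm_real, Real.norm_eq_abs, Real.abs_exp, norm_cpow_eq_rpow_re_of_pos ht,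
    sub_re, one_re, neg_mul]

variable {ι : Type*} [Countable ι]

lemma mellinConvergent_of_hasSum_exp {a : ι → ℂ} {p : ι → ℝ} {F : ℝ → ℂ} {s : ℂ}
    (hp : ∀ i, 0 < p i) (hs : 0 < s.re)
    (hF : ∀ t ∈ Ioi 0, HasSum (fun i ↦ a i * rexp (-p i * t)) (F t))
    (h_sum : Summable fun i ↦ ‖a i‖ / p i ^ s.re) :
    MellinConvergent F s := by
  have h_int i : IntegrableOn (fun t : ℝ ↦ (t : ℂ) ^ (s - 1) * (a i * rexp (-p i * t)))
      (Ioi 0) := by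
    simpa only [MellinConvergent, smul_eq_mul] using
      (mellinConvergent_exp_neg_mul (hp i) hs).const_smul (a i)
  have h_norm i : ∫ t : ℝ in Ioi 0, ‖(t : ℂ) ^ (s - 1) * (a i * rexp (-p i * t))‖
      = Real.Gamma s.re * (‖a i‖ / p i ^ s.re) := by
    simp_rw [mul_left_comm _ (a i), norm_mul (a i), integral_const_mul,
      integral_norm_cpow_mul_exp_neg_mul (hp i) hs]
    ring
  refine IntegrableOn.congr_fun (integrable_tsum_of_summable_integral_norm h_int
    (by simpa only [h_norm] using h_sum.mul_left _)) (fun t ht ↦ ?_) measurableSet_Ioi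
  rw [tsum_mul_left, (hF t ht).tsum_eq, smul_eq_mul]

lemma cexp_two_pi_I_mul_mul_I (x t : ℝ) :
    cexp (2 * π * I * x * (t * I)) = rexp (-(2 * π * x) * t) := by
  rw [ofReal_exp]
  congr 1
  push_cast
  linear_combination (2 * π * x * t : ℂ) * I_sq

lemma summable_norm_div_rpow_of_norm_le {a : ℕ → ℂ} {C M σ : ℝ}
    (hb : ∀ m : ℕ, 1 ≤ m → ‖a m‖ ≤ C * (m : ℝ) ^ M) (hσ : M + 1 < σ) :
    Summable fun m : ℕ+ ↦ ‖a m‖ / ((m : ℕ) : ℝ) ^ σ := by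
  have h_rpow : Summable fun m : ℕ+ ↦ ((m : ℕ) : ℝ) ^ (M - σ) :=
    (Real.summable_nat_rpow.2 (by linarith)).comp_injective PNat.coe_injective
  refine .of_nonneg_of_le (fun m ↦ by positivity) (fun m ↦ ?_) (h_rpow.mul_left C)
  have hm : (0 : ℝ) < (m : ℕ) := by exact_mod_cast m.pos
  rw [Real.rpow_sub hm, ← mul_div_assoc]
  gcongr
  exact hb m m.pos

theorem mellin_of_q_expansion_general
    (f : ℂ → ℂ) (a : ℕ → ℂ) (C M : ℝ) (hM : 0 < M)
    (hb : ∀ m : ℕ, 1 ≤ m → ‖a m‖ ≤ C * (m : ℝ) ^ M)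
    (hconv : ∀ z : ℂ, 0 < z.im →
      Summable (fun m : ℕ+ => ‖a m * Complex.exp (2 * Real.pi * Complex.I * (m : ℂ) * z)‖))
    (hf : ∀ z : ℂ, 0 < z.im →
      f z = ∑' m : ℕ+, a m * Complex.exp (2 * Real.pi * Complex.I * (m : ℂ) * z))
    (s : ℂ) (hs : M + 1 < s.re) :
    MeasureTheory.IntegrableOn
        (fun t : ℝ => f ((t : ℂ) * Complex.I) * ((t : ℂ)) ^ (s - 1)) (Set.Ioi 0)
    ∧ Summable (fun m : ℕ+ => ‖a m * ((m : ℕ) : ℂ) ^ (-s)‖)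
    ∧ (∫ t in Set.Ioi (0 : ℝ), f ((t : ℂ) * Complex.I) * ((t : ℂ)) ^ (s - 1))
        = Complex.Gamma s * ((2 * Real.pi : ℝ) : ℂ) ^ (-s) *
            ∑' m : ℕ+, a m * ((m : ℕ) : ℂ) ^ (-s) := by
  have hs0 : 0 < s.re := by linarith
  have hp (m : ℕ+) : 0 < 2 * π * (m : ℕ) := by positivity
  have h_dir := summable_norm_div_rpow_of_norm_le hb hs
  have hF (t : ℝ) (ht : t ∈ Ioi 0) :
      HasSum (fun m : ℕ+ ↦ a m * rexp (-(2 * π * (m : ℕ)) * t)) (f (t * I)) := by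
    have him : 0 < ((t : ℂ) * I).im := by simpa using ht
    have h := (hconv _ him).of_norm.hasSum
    rw [← hf _ him] at h
    simpa only [← ofReal_natCast, cexp_two_pi_I_mul_mul_I] using h
  have h_sum : Summable fun m : ℕ+ ↦ ‖a m‖ / (2 * π * (m : ℕ)) ^ s.re := by
    simpa only [Real.mul_rpow two_pi_pos.le (Nat.cast_nonneg _), div_mul_eq_div_div_swap]
      using h_dir.div_const ((2 * π) ^ s.re)
  have h_mellin := hasSum_mellin (fun m ↦ Or.inr (hp m)) hs0 hF h_sum
  have h_integrand : EqOn (fun t : ℝ ↦ (t : ℂ) ^ (s - 1) • f (t * I))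
      (fun t : ℝ ↦ f (t * I) * (t : ℂ) ^ (s - 1)) (Ioi 0) := fun t _ ↦ mul_comm _ _
  refine ⟨(mellinConvergent_of_hasSum_exp hp hs0 hF h_sum).congr_fun h_integrand measurableSet_Ioi,
    ?_, ?_⟩
  · refine h_dir.congr fun m ↦ ?_
    rw [norm_mul, norm_natCast_cpow_of_pos m.pos, neg_re, Real.rpow_neg (Nat.cast_nonneg _),
      div_eq_mul_inv]
  · have h_term (m : ℕ+) : Gamma s * a m / ((2 * π * (m : ℕ) : ℝ) : ℂ) ^ s
        = Gamma s * ((2 * π : ℝ) : ℂ) ^ (-s) * (a m * ((m : ℕ) : ℂ) ^ (-s)) := by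
      rw [ofReal_mul, mul_cpow_ofReal_nonneg two_pi_pos.le (Nat.cast_nonneg _), cpow_neg,
        cpow_neg, ofReal_natCast]
      field_simp
    rw [← tsum_mul_left, (h_mellin.congr_fun fun m ↦ (h_term m).symm).tsum_eq]
    exact (setIntegral_congr_fun measurableSet_Ioi h_integrand).symm

/-- for f(z) = ∑_{m≥1} a_m e^{2πimz} with |a_m| ≤ C m^M and
Re(s) > M+1, the Mellin transform ∫_0^∞ f(it) t^{s-1} dt equals
Γ(s)(2π)^{-s} ∑ a_m m^{-s}, both sides converging absolutely. -/
theorem mellin_of_q_expansion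
    (f : ℂ → ℂ) (a : ℕ → ℂ) (C M : ℝ) (hC : 0 < C) (hM : 0 < M)
    (hb : ∀ m : ℕ, 1 ≤ m → ‖a m‖ ≤ C * (m : ℝ) ^ M)
    (hconv : ∀ z : ℂ, 0 < z.im →
      Summable (fun m : ℕ+ => ‖a m * Complex.exp (2 * Real.pi * Complex.I * (m : ℂ) * z)‖))
    (hf : ∀ z : ℂ, 0 < z.im →
      f z = ∑' m : ℕ+, a m * Complex.exp (2 * Real.pi * Complex.I * (m : ℂ) * z))
    (s : ℂ) (hs : M + 1 < s.re) :
    MeasureTheory.IntegrableOn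
        (fun t : ℝ => f ((t : ℂ) * Complex.I) * ((t : ℂ)) ^ (s - 1)) (Set.Ioi 0)
    ∧ Summable (fun m : ℕ+ => ‖a m * ((m : ℕ) : ℂ) ^ (-s)‖)
    ∧ (∫ t in Set.Ioi (0 : ℝ), f ((t : ℂ) * Complex.I) * ((t : ℂ)) ^ (s - 1))
        = Complex.Gamma s * ((2 * Real.pi : ℝ) : ℂ) ^ (-s) *
            ∑' m : ℕ+, a m * ((m : ℕ) : ℂ) ^ (-s) :=
  mellin_of_q_expansion_general f a C M hM hb hconv hf s hs
end

section
/- Term-by-term q-expansion antiderivative: if g(z) = ∑_{m≥1} b_m e^{2πimz} converges absolutely and locally uniformly on ℍ with b_m of polynomial growth, then the function G(z) := ∫_{i∞}^z g(z₁)(z₁ - z)^{α-1} dz₁ (path: vertical line through z, α a positive integer) has Fourier expansion G(z) = (-1)·Γ(α)/(-2πi)^α · ∑_{m≥1} b_m m^{-α} e^{2πimz}. Equivalently, (d/dz)^α of the right-hand side equals (-1)^{α-1}(α-1)! g(z). -/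
open scoped BigOperators

open MeasureTheory Complex Set Real

/-- n = 1 case of Prop. 3.4: the Eichler-type integral
G(z) = ∫_{i∞}^z g(z₁)(z₁-z)^{α-1} dz₁ (vertical path, z₁ = z + it) of a q-expansion
g(z) = ∑_{m≥1} b_m e^{2πimz} has Fourier expansion
G(z) = -Γ(α)/(-2πi)^α · ∑_{m≥1} b_m m^{-α} e^{2πimz}. -/
theorem eichler_integral_fourier_expansion
    (g : ℂ → ℂ) (b : ℕ → ℂ) (C M : ℝ) (hC : 0 < C) (hM : 0 < M)
    (hb : ∀ m : ℕ, 1 ≤ m → ‖b m‖ ≤ C * (m : ℝ) ^ M)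
    (hconv : ∀ z : ℂ, 0 < z.im →
      Summable (fun m : ℕ+ => ‖b m * Complex.exp (2 * Real.pi * Complex.I * (m : ℂ) * z)‖))
    (hg : ∀ z : ℂ, 0 < z.im →
      g z = ∑' m : ℕ+, b m * Complex.exp (2 * Real.pi * Complex.I * (m : ℂ) * z))
    (α : ℕ) (hα : 1 ≤ α) (z : ℂ) (hz : 0 < z.im)
    (hint : MeasureTheory.IntegrableOn
      (fun t : ℝ => g (z + (t : ℂ) * Complex.I) * ((t : ℂ) * Complex.I) ^ (α - 1))
      (Set.Ioi 0)) :
    -(∫ t in Set.Ioi (0 : ℝ),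
        g (z + (t : ℂ) * Complex.I) * ((t : ℂ) * Complex.I) ^ (α - 1) * Complex.I)
      = (-1 : ℂ) * (Nat.factorial (α - 1) : ℂ) / (-(2 * Real.pi * Complex.I)) ^ α *
          ∑' m : ℕ+, b m * ((m : ℕ) : ℂ) ^ (-(α : ℂ)) *
            Complex.exp (2 * Real.pi * Complex.I * (m : ℂ) * z) := by
  set a : ℕ+ → ℂ := fun m => b m * Complex.exp (2 * Real.pi * Complex.I * (m : ℂ) * z) with ha
  set p : ℕ+ → ℝ := fun m => 2 * Real.pi * m with hp
  have hppos : ∀ m : ℕ+, 0 < p m := fun m => by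
    have : (0:ℝ) < m := by exact_mod_cast m.pos
    positivity
  have hsRe : (0:ℝ) < ((α : ℂ)).re := by
    simpa using (by exact_mod_cast hα : (0:ℕ) < α)
  have hF : ∀ t ∈ Ioi (0:ℝ), HasSum (fun m : ℕ+ => a m * Real.exp (-(p m) * t))
      (g (z + (t:ℂ) * Complex.I)) := by
    intro t ht
    have him : 0 < (z + (t:ℂ) * Complex.I).im := by
      simp only [Complex.add_im, Complex.mul_im, Complex.ofReal_re, Complex.I_im,
        Complex.ofReal_im, Complex.I_re, mul_one, mul_zero, add_zero, zero_mul]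
      exact add_pos hz ht
    have hsum : Summable (fun m : ℕ+ => b m *
        Complex.exp (2 * Real.pi * Complex.I * (m : ℂ) * (z + (t:ℂ) * Complex.I))) :=
      (hconv _ him).of_norm
    have := hsum.hasSum
    rw [← hg _ him] at this
    refine this.congr_fun fun m => ?_
    have hexp : 2 * (Real.pi:ℂ) * Complex.I * (m:ℂ) * (z + (t:ℂ) * Complex.I)
        = 2 * (Real.pi:ℂ) * Complex.I * (m:ℂ) * z + ((-(p m) * t : ℝ) : ℂ) := by
      rw [hp]
      push_cast
      linear_combination (2 * (Real.pi:ℂ) * (m:ℕ) * t) * Complex.I_sq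
    rw [ha]
    simp only []
    rw [mul_assoc, Complex.ofReal_exp, ← Complex.exp_add, ← hexp]
  have h_sum : Summable (fun m : ℕ+ => ‖a m‖ / (p m) ^ ((α:ℂ)).re) := by
    refine Summable.of_nonneg_of_le (fun m => by positivity) (fun m => ?_) (hconv z hz)
    have h1 : (1:ℝ) ≤ p m ^ ((α:ℂ)).re := by
      apply Real.one_le_rpow _ hsRe.le
      have hm : (1:ℝ) ≤ (m:ℝ) := by exact_mod_cast m.one_le
      have hpi : (1:ℝ) ≤ 2 * Real.pi := by nlinarith [Real.pi_gt_three]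
      calc (1:ℝ) ≤ 2 * Real.pi := hpi
        _ ≤ 2 * Real.pi * m := by nlinarith
    calc ‖a m‖ / (p m) ^ ((α:ℂ)).re ≤ ‖a m‖ / 1 := by
          apply div_le_div_of_nonneg_left (norm_nonneg _) one_pos h1 |>.trans_eq rfl
      _ = ‖a m‖ := div_one _
  have key := hasSum_mellin (a := a) (p := p) (F := fun t => g (z + (t:ℂ) * Complex.I))
    (s := (α:ℂ)) (fun m => Or.inr (hppos m)) hsRe hF h_sum
  have hmel : (∫ t in Set.Ioi (0:ℝ),
      g (z + (t:ℂ) * Complex.I) * ((t:ℂ) * Complex.I) ^ (α - 1) * Complex.I)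
      = Complex.I ^ α * mellin (fun t => g (z + (t:ℂ) * Complex.I)) (α:ℂ) := by
    rw [mellin, ← MeasureTheory.integral_const_mul]
    refine MeasureTheory.setIntegral_congr_fun measurableSet_Ioi (fun t ht => ?_)
    have hc : ((α:ℂ) - 1) = ((α - 1 : ℕ) : ℂ) := by
      push_cast [Nat.cast_sub hα]; ring
    rw [smul_eq_mul, hc, Complex.cpow_natCast]
    nth_rewrite 2 [← Nat.sub_add_cancel hα]
    rw [pow_succ]
    ring
  rw [hmel, ← key.tsum_eq, ← tsum_mul_left, ← tsum_mul_left, ← tsum_neg]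
  refine tsum_congr fun m => ?_
  have hGamma : Complex.Gamma (α:ℂ) = (Nat.factorial (α - 1) : ℂ) := by
    rw [← Nat.sub_add_cancel hα]
    push_cast
    exact Complex.Gamma_nat_eq_factorial (α - 1)
  have hmne : ((m:ℕ) : ℂ) ≠ 0 := by exact_mod_cast m.ne_zero
  have hpne : ((p m : ℝ) : ℂ) ≠ 0 := Complex.ofReal_ne_zero.mpr (hppos m).ne'
  have hcp : ((p m : ℝ) : ℂ) ^ (α:ℂ) = ((p m : ℝ) : ℂ) ^ α :=
    Complex.cpow_natCast _ _
  have hcm : ((m:ℕ) : ℂ) ^ (-(α:ℂ)) = (((m:ℕ):ℂ) ^ α)⁻¹ := by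
    rw [Complex.cpow_neg, Complex.cpow_natCast]
  have hbase : Complex.I * (-(2 * (Real.pi:ℂ) * Complex.I)) * ((m:ℕ):ℂ)
      = ((p m : ℝ) : ℂ) := by
    rw [hp]
    push_cast
    linear_combination (-(2 * (Real.pi:ℂ) * (m:ℕ))) * Complex.I_sq
  have hkey : Complex.I ^ α * (-(2 * (Real.pi:ℂ) * Complex.I)) ^ α * ((m:ℕ):ℂ) ^ α
      = ((p m : ℝ) : ℂ) ^ α := by
    rw [← mul_pow, ← mul_pow, hbase]
  rw [hGamma, hcp, hcm, ← hkey]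
  have hIne : Complex.I ^ α ≠ 0 := pow_ne_zero _ Complex.I_ne_zero
  have hQne : (-(2 * (Real.pi:ℂ) * Complex.I)) ^ α ≠ 0 := by
    apply pow_ne_zero
    simp [Real.pi_ne_zero, Complex.I_ne_zero]
  have hPne : ((p m : ℝ) : ℂ) ^ α ≠ 0 := pow_ne_zero _ hpne
  have hMne : ((m:ℕ):ℂ) ^ α ≠ 0 := pow_ne_zero _ hmne
  field_simp
  ring
end

section
/- For n = 2: with f₁(z) = ∑ c^{(1)}_m q^m, f₂(z) = ∑ c^{(2)}_m q^m of polynomial-growth coefficients, and α₂ ≥ 1 an integer, the function F̃(z) := f₁(z) · ∫_{i∞}^z f₂(z₂)(z₂ - z)^{α₂-1} dz₂ has Fourier expansion F̃(z) = -Γ(α₂)/(-2πi)^{α₂} · ∑_{m₁ > m₂ > 0} c^{(1)}_{m₁-m₂} c^{(2)}_{m₂} m₂^{-α₂} e^{2πi m₁ z}. -/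
/-!
Along the vertical ray from `z`, each exponential integrates to a Gamma integral:
`∫_z^{i∞} e^{2πimw} (w - z)^{α-1} dw = (α-1)! / (-2πim)^α · e^{2πimz}`. Each such integrand is a
constant times a nonnegative real function, so the norms of the integrals are the integrals of the
norms, and polynomial growth of the coefficients lets us integrate `f₂` term by term. The inner
integral is therefore `(α-1)!/(-2πi)^α` times the `q`-series with coefficients `c⁽²⁾_m m^{-α}`, and
multiplying by `f₁` is the Cauchy product of two absolutely convergent `q`-series, reindexed by
`(k, m) ↦ (k + m, m)`.
-/

open Complex MeasureTheory Set
open scoped Real Nat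

lemma summable_rpow_mul_exp_neg_mul (M : ℝ) {y : ℝ} (hy : 0 < y) :
    Summable fun m : ℕ+ => (m : ℝ) ^ M * Real.exp (-(y * m)) := by
  refine ((Real.summable_pow_mul_exp_neg_nat_mul ⌈M⌉₊ hy).comp_injective
    PNat.coe_injective).of_nonneg_of_le (fun m => by positivity) fun m => ?_
  have hm : (1 : ℝ) ≤ m := by exact_mod_cast m.pos
  calc (m : ℝ) ^ M * Real.exp (-(y * m))
      ≤ (m : ℝ) ^ (⌈M⌉₊ : ℝ) * Real.exp (-(y * m)) := by
        gcongr
        exact Nat.le_ceil M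
    _ = (m : ℝ) ^ ⌈M⌉₊ * Real.exp (-y * m) := by rw [Real.rpow_natCast, neg_mul]

lemma norm_cexp_two_pi_I_mul (m : ℝ) (z : ℂ) :
    ‖cexp (2 * π * I * m * z)‖ = Real.exp (-(2 * π * z.im * m)) := by
  rw [norm_exp]
  congr 1
  simp only [mul_re, mul_im, re_ofNat, im_ofNat, ofReal_re, ofReal_im, I_re, I_im, mul_zero,
    zero_mul, mul_one, sub_zero, add_zero, sub_self, zero_add, zero_sub, neg_inj]
  ring

lemma summable_norm_coeff_mul_cexp {c : ℕ → ℂ} {C M : ℝ}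
    (hc : ∀ m : ℕ, 1 ≤ m → ‖c m‖ ≤ C * (m : ℝ) ^ M) {z : ℂ} (hz : 0 < z.im) :
    Summable fun m : ℕ+ => ‖c m * cexp (2 * π * I * m * z)‖ := by
  refine ((summable_rpow_mul_exp_neg_mul M (by positivity : 0 < 2 * π * z.im)).mul_left
    C).of_nonneg_of_le (fun m => norm_nonneg _) fun m => ?_
  rw [norm_mul, ← ofReal_natCast, norm_cexp_two_pi_I_mul, ← mul_assoc]
  exact mul_le_mul_of_nonneg_right (hc m m.pos) (Real.exp_pos _).le

lemma norm_natCast_cpow_neg_le_one {m : ℕ} (hm : 1 ≤ m) {s : ℂ} (hs : 0 ≤ s.re) :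
    ‖(m : ℂ) ^ (-s)‖ ≤ 1 := by
  rw [norm_natCast_cpow_of_pos hm, neg_re]
  exact Real.rpow_le_one_of_one_le_of_nonpos (by exact_mod_cast hm) (neg_nonpos.mpr hs)

lemma summable_norm_coeff_mul_cpow_neg_mul_cexp {c : ℕ → ℂ} {C M : ℝ}
    (hc : ∀ m : ℕ, 1 ≤ m → ‖c m‖ ≤ C * (m : ℝ) ^ M) {s : ℂ} (hs : 0 ≤ s.re) {z : ℂ}
    (hz : 0 < z.im) :
    Summable fun m : ℕ+ => ‖c m * (m : ℂ) ^ (-s) * cexp (2 * π * I * m * z)‖ :=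
  summable_norm_coeff_mul_cexp (c := fun m => c m * (m : ℂ) ^ (-s)) (fun m hm =>
    (norm_mul_le _ _).trans <| (mul_le_of_le_one_right (norm_nonneg _)
      (norm_natCast_cpow_neg_le_one hm hs)).trans (hc m hm)) hz

def pnatProdEquivLtPos : ℕ+ × ℕ+ ≃ {p : ℕ × ℕ // p.2 < p.1 ∧ 0 < p.2} where
  toFun w := ⟨(w.1 + w.2, w.2), by simp [w.1.pos, w.2.pos]⟩
  invFun p := (⟨p.1.1 - p.1.2, Nat.sub_pos_of_lt p.2.1⟩, ⟨p.1.2, p.2.2⟩)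
  left_inv w := Prod.ext (PNat.eq (by simp)) rfl
  right_inv p := by ext <;> simp [Nat.sub_add_cancel p.2.1.le]

lemma cexp_two_pi_I_natCast_add_mul (k m : ℕ) (z : ℂ) :
    cexp (2 * π * I * ((k + m : ℕ) : ℂ) * z) =
      cexp (2 * π * I * k * z) * cexp (2 * π * I * m * z) := by
  rw [← exp_add]
  push_cast
  ring_nf

lemma tsum_coeff_mul_cexp_mul_tsum {a b : ℕ → ℂ} {z : ℂ}
    (ha : Summable fun k : ℕ+ => ‖a k * cexp (2 * π * I * k * z)‖)
    (hb : Summable fun m : ℕ+ => ‖b m * cexp (2 * π * I * m * z)‖) :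
    (∑' k : ℕ+, a k * cexp (2 * π * I * k * z)) * (∑' m : ℕ+, b m * cexp (2 * π * I * m * z)) =
      ∑' p : {p : ℕ × ℕ // p.2 < p.1 ∧ 0 < p.2},
        a (p.1.1 - p.1.2) * b p.1.2 * cexp (2 * π * I * p.1.1 * z) := by
  rw [tsum_mul_tsum_of_summable_norm ha hb, ← pnatProdEquivLtPos.tsum_eq]
  refine tsum_congr fun w => ?_
  simp only [pnatProdEquivLtPos, Equiv.coe_fn_mk, Nat.add_sub_cancel,
    cexp_two_pi_I_natCast_add_mul]
  ring

lemma integral_pow_mul_exp_neg_mul_Ioi (n : ℕ) {r : ℝ} (hr : 0 < r) :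
    ∫ t in Ioi (0 : ℝ), t ^ n * Real.exp (-(r * t)) = n ! / r ^ (n + 1) := by
  have h := Real.integral_rpow_mul_exp_neg_mul_Ioi (a := n + 1) (by positivity) hr
  simp only [add_sub_cancel_right, Real.rpow_natCast] at h
  rw [Real.Gamma_nat_eq_factorial, ← Nat.cast_add_one, Real.rpow_natCast] at h
  rw [h, one_div_pow, one_div_mul_eq_div]

lemma integral_norm_mul_ofReal_of_nonneg {α : Type*} [MeasurableSpace α] {μ : Measure α}
    {g : α → ℝ} (hg : 0 ≤ᵐ[μ] g) (k : ℂ) :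
    ∫ a, ‖k * (g a : ℂ)‖ ∂μ = ‖∫ a, k * (g a : ℂ) ∂μ‖ := by
  have hg' : 0 ≤ ∫ a, g a ∂μ := integral_nonneg_of_ae hg
  simp_rw [norm_mul, norm_real]
  rw [integral_const_mul, integral_const_mul, integral_complex_ofReal, norm_mul, norm_real,
    Real.norm_of_nonneg hg', integral_congr_ae (hg.mono fun a ha => Real.norm_of_nonneg ha)]

lemma cexp_vertical_mul_pow_eq (m t : ℝ) (z : ℂ) (n : ℕ) :
    cexp (2 * π * I * m * (z + t * I)) * (t * I) ^ n * I =
      I ^ (n + 1) * cexp (2 * π * I * m * z) *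
        ((t ^ n * Real.exp (-(2 * π * m * t)) : ℝ) : ℂ) := by
  have h : 2 * π * I * m * (z + t * I) = 2 * π * I * m * z + ((-(2 * π * m * t) : ℝ) : ℂ) := by
    push_cast
    linear_combination (2 * π * m * t : ℂ) * I_sq
  rw [h, exp_add, ← ofReal_exp]
  push_cast
  ring

lemma integral_cexp_vertical_mul_pow {m : ℝ} (hm : 0 < m) (z : ℂ) (n : ℕ) :
    ∫ t in Ioi (0 : ℝ), cexp (2 * π * I * m * (z + t * I)) * (t * I) ^ n * I =
      n ! / (-(2 * π * I * m)) ^ (n + 1) * cexp (2 * π * I * m * z) := by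
  simp_rw [cexp_vertical_mul_pow_eq]
  rw [integral_const_mul, integral_complex_ofReal,
    integral_pow_mul_exp_neg_mul_Ioi n (by positivity : 0 < 2 * π * m)]
  have hI : -(2 * π * I * m) * I = 2 * π * m := by
    linear_combination (-(2 * π * m) : ℂ) * I_sq
  have h0 : -(2 * π * I * m : ℂ) ≠ 0 := by simp [hm.ne', Real.pi_ne_zero]
  push_cast
  rw [← hI, mul_pow]
  field_simp

lemma integrableOn_cexp_vertical_mul_pow {m : ℝ} (hm : 0 < m) (z : ℂ) (n : ℕ) :
    IntegrableOn (fun t : ℝ => cexp (2 * π * I * m * (z + t * I)) * (t * I) ^ n * I) (Ioi 0) :=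
  Integrable.of_integral_ne_zero <| by
    rw [integral_cexp_vertical_mul_pow hm]
    have : (2 * π * I * m : ℂ) ≠ 0 := by simp [hm.ne', Real.pi_ne_zero]
    simp [exp_ne_zero, this, Nat.factorial_ne_zero]

lemma integral_norm_cexp_vertical_mul_pow (m : ℝ) (z : ℂ) (n : ℕ) :
    ∫ t in Ioi (0 : ℝ), ‖cexp (2 * π * I * m * (z + t * I)) * (t * I) ^ n * I‖ =
      ‖∫ t in Ioi (0 : ℝ), cexp (2 * π * I * m * (z + t * I)) * (t * I) ^ n * I‖ := by
  simp_rw [cexp_vertical_mul_pow_eq]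
  exact integral_norm_mul_ofReal_of_nonneg (ae_restrict_of_forall_mem measurableSet_Ioi
    fun t (ht : 0 < t) => by positivity) _

lemma coeff_mul_integral_cexp_vertical_mul_pow (c : ℂ) {m : ℕ} (hm : 0 < m) (z : ℂ) (n : ℕ) :
    c * ∫ t in Ioi (0 : ℝ), cexp (2 * π * I * m * (z + t * I)) * (t * I) ^ n * I =
      n ! / (-(2 * π * I)) ^ (n + 1) *
        (c * (m : ℂ) ^ (-((n + 1 : ℕ) : ℂ)) * cexp (2 * π * I * m * z)) := by
  have h := integral_cexp_vertical_mul_pow (Nat.cast_pos.mpr hm : (0 : ℝ) < m) z n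
  rw [ofReal_natCast] at h
  have hm0 : (m : ℂ) ≠ 0 := Nat.cast_ne_zero.mpr hm.ne'
  rw [h, cpow_neg, cpow_natCast, ← neg_mul, mul_pow]
  field_simp

theorem integral_vertical_qSeries_mul_pow {f : ℂ → ℂ} {c : ℕ → ℂ} {C M : ℝ}
    (hc : ∀ m : ℕ, 1 ≤ m → ‖c m‖ ≤ C * (m : ℝ) ^ M)
    (hf : ∀ w : ℂ, 0 < w.im → f w = ∑' m : ℕ+, c m * cexp (2 * π * I * m * w))
    {α : ℕ} (hα : 1 ≤ α) {z : ℂ} (hz : 0 < z.im) :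
    ∫ t in Ioi (0 : ℝ), f (z + t * I) * (t * I) ^ (α - 1) * I =
      (α - 1)! / (-(2 * π * I)) ^ α *
        ∑' m : ℕ+, c m * (m : ℂ) ^ (-(α : ℂ)) * cexp (2 * π * I * m * z) := by
  obtain ⟨n, rfl⟩ : ∃ n, α = n + 1 := ⟨α - 1, by omega⟩
  rw [Nat.add_sub_cancel]
  set E : ℕ+ → ℝ → ℂ := fun m t => cexp (2 * π * I * m * (z + t * I)) * (t * I) ^ n * I
  have hseries : EqOn (fun t : ℝ => f (z + t * I) * (t * I) ^ n * I)
      (fun t => ∑' m : ℕ+, c m * E m t) (Ioi 0) := fun t (ht : 0 < t) => by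
    have him : 0 < (z + t * I).im := by simpa using add_pos hz ht
    simp only [E, hf _ him, ← tsum_mul_right, mul_assoc]
  have hterm (m : ℕ+) : ∫ t in Ioi (0 : ℝ), c m * E m t = n ! / (-(2 * π * I)) ^ (n + 1) *
      (c m * (m : ℂ) ^ (-((n + 1 : ℕ) : ℂ)) * cexp (2 * π * I * m * z)) := by
    rw [integral_const_mul]
    exact coeff_mul_integral_cexp_vertical_mul_pow (c m) m.pos z n
  have hint (m : ℕ+) : Integrable (fun t => c m * E m t) (volume.restrict (Ioi 0)) := by
    have := integrableOn_cexp_vertical_mul_pow (Nat.cast_pos.mpr m.pos : (0 : ℝ) < (m : ℕ)) z n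
    simp only [ofReal_natCast] at this
    exact this.const_mul (c m)
  have hnorm (m : ℕ+) :
      ∫ t in Ioi (0 : ℝ), ‖c m * E m t‖ = ‖∫ t in Ioi (0 : ℝ), c m * E m t‖ := by
    have := integral_norm_cexp_vertical_mul_pow (m : ℕ) z n
    simp only [ofReal_natCast] at this
    simp only [norm_mul (c m), integral_const_mul, E, this]
  have hsum : Summable fun m : ℕ+ => ∫ t in Ioi (0 : ℝ), ‖c m * E m t‖ := by
    simp only [hnorm, hterm, norm_mul (_ / _)]
    exact (summable_norm_coeff_mul_cpow_neg_mul_cexp hc (natCast_re _ ▸ Nat.cast_nonneg _)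
      hz).mul_left _
  rw [setIntegral_congr_fun measurableSet_Ioi hseries,
    ← integral_tsum_of_summable_integral_norm hint hsum, ← tsum_mul_left]
  exact tsum_congr hterm

theorem F_tilde_fourier_expansion_general
    (f₁ f₂ : ℂ → ℂ) (c₁ c₂ : ℕ → ℂ) (C M : ℝ)
    (hb₁ : ∀ m : ℕ, 1 ≤ m → ‖c₁ m‖ ≤ C * (m : ℝ) ^ M)
    (hb₂ : ∀ m : ℕ, 1 ≤ m → ‖c₂ m‖ ≤ C * (m : ℝ) ^ M)
    (hf₁ : ∀ z : ℂ, 0 < z.im →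
      f₁ z = ∑' m : ℕ+, c₁ m * Complex.exp (2 * Real.pi * Complex.I * (m : ℂ) * z))
    (hf₂ : ∀ z : ℂ, 0 < z.im →
      f₂ z = ∑' m : ℕ+, c₂ m * Complex.exp (2 * Real.pi * Complex.I * (m : ℂ) * z))
    (α₂ : ℕ) (hα₂ : 1 ≤ α₂) (z : ℂ) (hz : 0 < z.im) :
    f₁ z * (-(∫ t in Set.Ioi (0 : ℝ),
        f₂ (z + (t : ℂ) * Complex.I) * ((t : ℂ) * Complex.I) ^ (α₂ - 1) * Complex.I))
      = -(Nat.factorial (α₂ - 1) : ℂ) / (-(2 * Real.pi * Complex.I)) ^ α₂ *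
          ∑' p : {p : ℕ × ℕ // p.2 < p.1 ∧ 0 < p.2},
            c₁ ((p : ℕ × ℕ).1 - (p : ℕ × ℕ).2) * c₂ (p : ℕ × ℕ).2 *
              (((p : ℕ × ℕ).2 : ℂ)) ^ (-(α₂ : ℂ)) *
              Complex.exp (2 * Real.pi * Complex.I * ((p : ℕ × ℕ).1 : ℂ) * z) := by
  rw [hf₁ z hz, integral_vertical_qSeries_mul_pow hb₂ hf₂ hα₂ hz]
  have hprod := tsum_coeff_mul_cexp_mul_tsum (b := fun m => c₂ m * (m : ℂ) ^ (-(α₂ : ℂ)))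
    (summable_norm_coeff_mul_cexp hb₁ hz)
    (summable_norm_coeff_mul_cpow_neg_mul_cexp hb₂ (natCast_re _ ▸ Nat.cast_nonneg _) hz)
  rw [neg_div, neg_mul, mul_neg, mul_left_comm, hprod]
  simp only [mul_assoc]

/-- n = 2 case of Prop. 3.4: the function
F̃(z) = f₁(z)·∫_{i∞}^z f₂(z₂)(z₂-z)^{α₂-1} dz₂ (vertical path) has Fourier expansion
F̃(z) = -Γ(α₂)/(-2πi)^{α₂} · ∑_{m₁>m₂>0} c⁽¹⁾_{m₁-m₂} c⁽²⁾_{m₂} m₂^{-α₂} e^{2πim₁z}. -/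
theorem F_tilde_fourier_expansion
    (f₁ f₂ : ℂ → ℂ) (c₁ c₂ : ℕ → ℂ) (C M : ℝ) (hC : 0 < C) (hM : 0 < M)
    (hb₁ : ∀ m : ℕ, 1 ≤ m → ‖c₁ m‖ ≤ C * (m : ℝ) ^ M)
    (hb₂ : ∀ m : ℕ, 1 ≤ m → ‖c₂ m‖ ≤ C * (m : ℝ) ^ M)
    (hf₁ : ∀ z : ℂ, 0 < z.im →
      f₁ z = ∑' m : ℕ+, c₁ m * Complex.exp (2 * Real.pi * Complex.I * (m : ℂ) * z))
    (hf₂ : ∀ z : ℂ, 0 < z.im →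
      f₂ z = ∑' m : ℕ+, c₂ m * Complex.exp (2 * Real.pi * Complex.I * (m : ℂ) * z))
    (α₂ : ℕ) (hα₂ : 1 ≤ α₂) (z : ℂ) (hz : 0 < z.im) :
    f₁ z * (-(∫ t in Set.Ioi (0 : ℝ),
        f₂ (z + (t : ℂ) * Complex.I) * ((t : ℂ) * Complex.I) ^ (α₂ - 1) * Complex.I))
      = -(Nat.factorial (α₂ - 1) : ℂ) / (-(2 * Real.pi * Complex.I)) ^ α₂ *
          ∑' p : {p : ℕ × ℕ // p.2 < p.1 ∧ 0 < p.2},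
            c₁ ((p : ℕ × ℕ).1 - (p : ℕ × ℕ).2) * c₂ (p : ℕ × ℕ).2 *
              (((p : ℕ × ℕ).2 : ℂ)) ^ (-(α₂ : ℂ)) *
              Complex.exp (2 * Real.pi * Complex.I * ((p : ℕ × ℕ).1 : ℂ) * z) :=
  F_tilde_fourier_expansion_general f₁ f₂ c₁ c₂ C M hb₁ hb₂ hf₁ hf₂ α₂ hα₂ z hz
end

section
/- The iterated Eichler integral admits the alternative expression Ĩ_a^z(α₁,...,α_n; f₁,...,f_n) = (-1)^{α₁+···+α_n} · (-1)^n Γ(α₁)···Γ(α_n) times the iterated integral from a to z of the word of 1-forms consisting of (α₁-1) copies of dz₁, then f₁ dz, then (α₂-1) copies of dz, then f₂ dz, ..., ending with (α_n-1) copies of dz followed by f_n dz. -/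
/-!
On the segment `t ↦ a + t (z - a)` the kernel `(z₁ - z)^(α-1)` becomes
`(-1)^(α-1) (z - a)^(α-1) (1 - t)^(α-1)`, and Cauchy's formula for repeated integration,
`∫₀ᵘ (u - t)^k g t dt = k! · (k+1)-fold primitive of g at u` (proved by integrating by parts),
turns it into `α - 1` further integrations of the constant form `dz`, each contributing a
factor `z - a`. Induction on the list of pairs `(fᵣ, αᵣ)` then gives the identity on any
convex domain on which the `fᵣ` are continuous.
-/

open scoped BigOperators

/-- Iterated path integral ∫_a^z g₁ dz₁ ∫_a^{z₁} g₂ dz₂ ⋯ of a word of integrands,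
along straight-line paths (which stay in ℍ since ℍ is convex). -/
noncomputable def iterIntegral (a : ℂ) : List (ℂ → ℂ) → ℂ → ℂ
  | [], _ => 1
  | g :: gs, z =>
      ∫ t in (0 : ℝ)..1,
        g (a + (t : ℂ) * (z - a)) * iterIntegral a gs (a + (t : ℂ) * (z - a)) * (z - a)

/-- The iterated Eichler integral Ĩ_a^z(α₁,…,α_n; f₁,…,f_n)
= ∫_a^z f₁(z₁)(z₁-z)^{α₁-1} dz₁ ∫_a^{z₁} f₂(z₂)(z₂-z₁)^{α₂-1} dz₂ ⋯,
along straight-line paths. -/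
noncomputable def iterEichler (a : ℂ) : List ((ℂ → ℂ) × ℕ) → ℂ → ℂ
  | [], _ => 1
  | p :: rest, z =>
      ∫ t in (0 : ℝ)..1,
        p.1 (a + (t : ℂ) * (z - a)) * ((a + (t : ℂ) * (z - a)) - z) ^ (p.2 - 1) *
          iterEichler a rest (a + (t : ℂ) * (z - a)) * (z - a)

open Set intervalIntegral
open scoped Interval Nat

noncomputable def primitive (g : ℝ → ℂ) (u : ℝ) : ℂ := ∫ t in (0 : ℝ)..u, g t

section Primitive

variable {g : ℝ → ℂ} {u : ℝ}

theorem hasDerivAt_primitive {x : ℝ} (hg : ContinuousOn g [[0, u]])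
    (hx : x ∈ Ioo (min 0 u) (max 0 u)) : HasDerivAt (primitive g) (g x) x :=
  integral_hasDerivAt_right
    (hg.mono (uIcc_subset_uIcc_left (Ioo_subset_Icc_self hx))).intervalIntegrable
    ((hg.mono Ioo_subset_Icc_self).stronglyMeasurableAtFilter isOpen_Ioo x hx)
    (hg.continuousAt (Icc_mem_nhds hx.1 hx.2))

theorem integral_sub_pow_mul_eq_iterate_primitive (hg : ContinuousOn g [[0, u]]) (k : ℕ) :
    ∫ t in (0 : ℝ)..u, ((u : ℂ) - t) ^ k * g t = k ! * primitive^[k + 1] g u := by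
  induction k generalizing g with
  | zero => simp [primitive]
  | succ k ih =>
    have hG : ContinuousOn (primitive g) [[0, u]] :=
      continuousOn_primitive_interval' hg.intervalIntegrable left_mem_uIcc
    have hpow : ∀ x : ℝ, HasDerivAt (fun t : ℝ => ((u : ℂ) - t) ^ (k + 1))
        (-((k + 1 : ℂ) * ((u : ℂ) - x) ^ k)) x := fun x => by
      simpa using (((hasDerivAt_id (x : ℂ)).const_sub (u : ℂ)).pow (k + 1)).comp_ofReal
    rw [integral_mul_deriv_eq_deriv_mul_of_hasDerivAt
      (Continuous.continuousOn (by fun_prop)) hG (fun x _ => hpow x)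
      (fun x hx => hasDerivAt_primitive hg hx) (Continuous.intervalIntegrable (by fun_prop) _ _)
      hg.intervalIntegrable]
    simp only [neg_mul, mul_assoc, integral_neg, integral_const_mul, ih hG,
      ← Function.iterate_succ_apply primitive (k + 1)]
    have hG0 : primitive g 0 = 0 := integral_same
    rw [sub_self, zero_pow k.succ_ne_zero, hG0, Nat.factorial_succ]
    push_cast
    ring

end Primitive

def lineParam (a z : ℂ) (t : ℝ) : ℂ := a + (t : ℂ) * (z - a)

section LineParam

variable {a z : ℂ}

@[simp] theorem lineParam_one : lineParam a z 1 = z := by simp [lineParam]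

theorem lineParam_sub_lineParam (t u : ℝ) :
    lineParam a z t - lineParam a z u = -(((u : ℂ) - t) * (z - a)) := by
  simp only [lineParam]; ring

theorem continuous_lineParam : Continuous (lineParam a z) := by
  unfold lineParam; fun_prop

theorem mapsTo_lineParam {U : Set ℂ} (hU : Convex ℝ U) (ha : a ∈ U) (hz : z ∈ U) :
    MapsTo (lineParam a z) [[0, 1]] U := fun t ht => by
  rw [uIcc_of_le zero_le_one] at ht
  simpa [lineParam, Complex.real_smul] using hU.add_smul_sub_mem ha hz ht

theorem integral_unitInterval_lineParam (F : ℂ → ℂ) (u : ℝ) :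
    ∫ s in (0 : ℝ)..1,
        F (a + (s : ℂ) * (lineParam a z u - a)) * (lineParam a z u - a)
      = ∫ t in (0 : ℝ)..u, F (lineParam a z t) * (z - a) := by
  have key := smul_integral_comp_mul_left (a := 0) (b := 1)
    (fun t => F (lineParam a z t) * (z - a)) u
  simp only [mul_zero, mul_one, Complex.real_smul, ← integral_const_mul] at key
  rw [← key]
  refine integral_congr fun s _ => ?_
  have hsub : lineParam a z u - a = u * (z - a) := by simp [lineParam]
  have hpt : a + (s : ℂ) * (u * (z - a)) = lineParam a z (u * s) := by
    simp only [lineParam]; push_cast; ring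
  rw [hsub, hpt]
  ring

theorem iterIntegral_cons_lineParam (g : ℂ → ℂ) (gs : List (ℂ → ℂ)) (u : ℝ) :
    iterIntegral a (g :: gs) (lineParam a z u)
      = ∫ t in (0 : ℝ)..u, g (lineParam a z t) * iterIntegral a gs (lineParam a z t) * (z - a) :=
  integral_unitInterval_lineParam (fun w => g w * iterIntegral a gs w) u

theorem iterEichler_cons_lineParam (p : (ℂ → ℂ) × ℕ) (rest : List ((ℂ → ℂ) × ℕ)) (u : ℝ) :
    iterEichler a (p :: rest) (lineParam a z u)
      = ∫ t in (0 : ℝ)..u, p.1 (lineParam a z t) *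
          (lineParam a z t - lineParam a z u) ^ (p.2 - 1) *
            iterEichler a rest (lineParam a z t) * (z - a) :=
  integral_unitInterval_lineParam
    (fun w => p.1 w * (w - lineParam a z u) ^ (p.2 - 1) * iterEichler a rest w) u

theorem iterIntegral_replicate_one_append_lineParam (f : ℂ → ℂ) (gs : List (ℂ → ℂ)) (k : ℕ)
    (u : ℝ) :
    iterIntegral a (List.replicate k (fun _ => 1) ++ f :: gs) (lineParam a z u)
      = (z - a) ^ k * primitive^[k + 1]
          (fun t => f (lineParam a z t) * iterIntegral a gs (lineParam a z t) * (z - a)) u := by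
  induction k generalizing u with
  | zero => simpa [primitive] using iterIntegral_cons_lineParam f gs u
  | succ k ih =>
    rw [List.replicate_succ, List.cons_append, iterIntegral_cons_lineParam,
      Function.iterate_succ_apply' primitive (k + 1), primitive, ← integral_const_mul]
    refine integral_congr fun t _ => ?_
    rw [ih]
    ring

theorem continuousOn_iterIntegral_lineParam {U : Set ℂ}
    (hseg : MapsTo (lineParam a z) [[0, 1]] U) {gs : List (ℂ → ℂ)} (hgs : ∀ g ∈ gs, ContinuousOn g U) :
    ContinuousOn (fun t => iterIntegral a gs (lineParam a z t)) [[0, 1]] := by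
  induction gs with
  | nil => exact continuousOn_const
  | cons g gs ih =>
    simp only [iterIntegral_cons_lineParam]
    refine continuousOn_primitive_interval' (ContinuousOn.intervalIntegrable ?_) left_mem_uIcc
    exact (((hgs g List.mem_cons_self).comp continuous_lineParam.continuousOn hseg).mul
      (ih fun g hg => hgs g (List.mem_cons_of_mem _ hg))).mul continuousOn_const

end LineParam

def eichlerWord (L : List ((ℂ → ℂ) × ℕ)) : List (ℂ → ℂ) :=
  L.flatMap fun p => List.replicate (p.2 - 1) (fun _ => (1 : ℂ)) ++ [p.1]

def eichlerConst (L : List ((ℂ → ℂ) × ℕ)) : ℂ :=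
  (-1 : ℂ) ^ (L.map Prod.snd).sum * (-1 : ℂ) ^ L.length *
    (L.map fun p => (Nat.factorial (p.2 - 1) : ℂ)).prod

theorem eichlerWord_cons (f : ℂ → ℂ) (k : ℕ) (L : List ((ℂ → ℂ) × ℕ)) :
    eichlerWord ((f, k + 1) :: L) = List.replicate k (fun _ => 1) ++ f :: eichlerWord L := by
  simp [eichlerWord]

theorem eichlerConst_cons (f : ℂ → ℂ) (k : ℕ) (L : List ((ℂ → ℂ) × ℕ)) :
    eichlerConst ((f, k + 1) :: L) = (-1) ^ k * k ! * eichlerConst L := by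
  simp only [eichlerConst, List.map_cons, List.sum_cons, List.length_cons, List.prod_cons,
    Nat.add_sub_cancel, pow_add]
  ring

theorem iterEichler_cons_eq {a z : ℂ} (f : ℂ → ℂ) (k : ℕ) (rest : List ((ℂ → ℂ) × ℕ))
    (C : ℂ) (w : List (ℂ → ℂ))
    (hrest : ∀ t ∈ [[(0 : ℝ), 1]],
      iterEichler a rest (lineParam a z t) = C * iterIntegral a w (lineParam a z t))
    (hg : ContinuousOn
      (fun t => f (lineParam a z t) * iterIntegral a w (lineParam a z t) * (z - a)) [[0, 1]]) :
    iterEichler a ((f, k + 1) :: rest) z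
      = (-1) ^ k * k ! * C * iterIntegral a (List.replicate k (fun _ => 1) ++ f :: w) z := by
  set g := fun t => f (lineParam a z t) * iterIntegral a w (lineParam a z t) * (z - a)
  calc iterEichler a ((f, k + 1) :: rest) z
      = iterEichler a ((f, k + 1) :: rest) (lineParam a z 1) := by rw [lineParam_one]
    _ = ∫ t in (0 : ℝ)..1, (-1) ^ k * C * (z - a) ^ k * ((((1 : ℝ) : ℂ) - t) ^ k * g t) := by
      rw [iterEichler_cons_lineParam]
      refine integral_congr fun t ht => ?_
      rw [hrest t ht, lineParam_sub_lineParam, Nat.add_sub_cancel, neg_pow, mul_pow]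
      ring
    _ = (-1) ^ k * k ! * C * ((z - a) ^ k * primitive^[k + 1] g 1) := by
      rw [integral_const_mul, integral_sub_pow_mul_eq_iterate_primitive hg]
      ring
    _ = _ := by rw [← iterIntegral_replicate_one_append_lineParam, lineParam_one]

theorem iterEichler_eq_eichlerConst_mul {U : Set ℂ} (hU : Convex ℝ U) {a : ℂ} (ha : a ∈ U)
    (L : List ((ℂ → ℂ) × ℕ)) (hf : ∀ p ∈ L, ContinuousOn p.1 U) (hα : ∀ p ∈ L, 1 ≤ p.2)
    {z : ℂ} (hz : z ∈ U) :
    iterEichler a L z = eichlerConst L * iterIntegral a (eichlerWord L) z := by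
  induction L generalizing z with
  | nil => simp [iterEichler, iterIntegral, eichlerConst, eichlerWord]
  | cons p rest ih =>
    obtain ⟨f, _ | k⟩ := p
    · exact absurd (hα _ List.mem_cons_self) (by simp)
    have hf_rest : ∀ q ∈ rest, ContinuousOn q.1 U := fun q hq => hf q (List.mem_cons_of_mem _ hq)
    have hα_rest : ∀ q ∈ rest, 1 ≤ q.2 := fun q hq => hα q (List.mem_cons_of_mem _ hq)
    have hword : ∀ g ∈ eichlerWord rest, ContinuousOn g U := by
      simp only [eichlerWord, List.mem_flatMap, List.mem_append, List.mem_replicate,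
        List.mem_singleton]
      rintro g ⟨q, hq, ⟨-, rfl⟩ | rfl⟩
      exacts [continuousOn_const, hf_rest q hq]
    have hseg := mapsTo_lineParam hU ha hz
    rw [eichlerWord_cons, eichlerConst_cons]
    exact iterEichler_cons_eq f k rest _ _ (fun t ht => ih hf_rest hα_rest (hseg ht))
      ((((hf _ List.mem_cons_self).comp continuous_lineParam.continuousOn hseg).mul
        (continuousOn_iterIntegral_lineParam hseg hword)).mul continuousOn_const)

/-- Prop. 4.1: Ĩ_a^z(α₁,…,α_n; f₁,…,f_n) equals
(-1)^{α₁+⋯+α_n}·(-1)^n Γ(α₁)⋯Γ(α_n) times the iterated integral of the word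
consisting of (α₁-1) copies of the constant form 1, then f₁, then (α₂-1) copies of 1,
then f₂, …, ending with (α_n-1) copies of 1 followed by f_n. -/
theorem iterEichler_eq_iterIntegral
    (L : List ((ℂ → ℂ) × ℕ))
    (hol : ∀ p ∈ L, DifferentiableOn ℂ p.1 {w : ℂ | 0 < w.im})
    (hα : ∀ p ∈ L, 1 ≤ p.2)
    (a z : ℂ) (ha : 0 < a.im) (hz : 0 < z.im) :
    iterEichler a L z
      = (-1 : ℂ) ^ ((L.map Prod.snd).sum) * (-1 : ℂ) ^ L.length *
          ((L.map (fun p => (Nat.factorial (p.2 - 1) : ℂ))).prod) *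
          iterIntegral a
            (L.flatMap (fun p => List.replicate (p.2 - 1) (fun _ => (1 : ℂ)) ++ [p.1])) z :=
  iterEichler_eq_eichlerConst_mul (convex_halfSpace_im_gt 0) ha L
    (fun p hp => (hol p hp).continuousOn) hα hz
end

section
/- If f holomorphic on ℍ satisfies f|_α w_N = ε f with ε ∈ {±1} and decays exponentially at i∞ and 0, then Λ(s,f) = (-1)^{s-α} N^{α/2-s} ε Λ(α-s, f), where Λ(s,f) = ∫_{i∞}^0 f(z) z^{s-1} dz. -/
/-!
Substituting `t = 1/(N u)` in the integral along the imaginary axis and applying the eigenrelation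
at `z = i u` turns the integrand of `Λ(s, f)` into `e^{iπ(s-α)} N^{α/2-s} ε` times that of
`Λ(α - s, f)`, up to a sign `(-1)^α` coming from the branch of `z^{s-1}`. That sign is harmless:
since `w_N² = -N` acts by `(-1)^α`, applying the eigenrelation twice gives `ε² f = (-1)^α f`,
and `ε² = 1`.
-/

open Complex MeasureTheory Set
open scoped Real

theorem integral_Ioi_eq_integral_comp_inv_mul {E : Type*} [NormedAddCommGroup E]
    [NormedSpace ℝ E] (g : ℝ → E) {c : ℝ} (hc : 0 < c) :
    ∫ t in Ioi 0, g t = ∫ u in Ioi 0, (c * u ^ 2)⁻¹ • g (c * u)⁻¹ := by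
  have hinv : ∫ t in Ioi 0, g t = ∫ x in Ioi 0, (x ^ 2)⁻¹ • g x⁻¹ := by
    rw [← integral_comp_rpow_Ioi g (p := -1) (by norm_num)]
    refine setIntegral_congr_fun measurableSet_Ioi fun x _ => ?_
    norm_num [Real.rpow_neg_one, show (-1 - 1 : ℝ) = (-2 : ℤ) by norm_num, Real.rpow_intCast]
  have hscale := integral_comp_mul_left_Ioi' (fun x => (x ^ 2)⁻¹ • g x⁻¹) 0 hc
  rw [mul_zero] at hscale
  rw [hinv, ← hscale, ← integral_smul]
  refine setIntegral_congr_fun measurableSet_Ioi fun u _ => ?_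
  rw [smul_smul]
  congr 1
  field_simp

theorem ofReal_mul_I_cpow {t : ℝ} (ht : 0 < t) (c : ℂ) :
    ((t : ℂ) * I) ^ c = exp ((Real.log t + π / 2 * I) * c) := by
  rw [cpow_def_of_ne_zero (by simp [ht.ne']), log_ofReal_mul ht I_ne_zero, log_I]

theorem ofReal_cpow_eq_exp {t : ℝ} (ht : 0 < t) (c : ℂ) :
    (t : ℂ) ^ c = exp (Real.log t * c) := by
  rw [cpow_def_of_ne_zero (by simp [ht.ne']), ofReal_log ht.le]

theorem neg_one_zpow_eq_exp (n : ℤ) : (-1 : ℂ) ^ n = exp (π * I * n) := by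
  rw [mul_comm, exp_int_mul, exp_pi_mul_I]

/-- The Jacobian of `t = 1/(N u)` times the automorphy factor of `w_N` at `z = i u`. -/
theorem fricke_factor_identity {N u : ℝ} (hN : 0 < N) (hu : 0 < u) (α : ℤ) (s : ℂ) :
    ((N * u ^ 2)⁻¹ : ℝ) * ((N : ℂ) ^ ((α : ℂ) / 2))⁻¹ * (((N * u : ℝ) : ℂ) * I) ^ α *
        ((((N * u)⁻¹ : ℝ) : ℂ) * I) ^ (s - 1)
      = (-1) ^ α * exp (π * I * (s - α)) * (N : ℂ) ^ ((α : ℂ) / 2 - s) *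
          ((u : ℂ) * I) ^ ((α : ℂ) - s - 1) := by
  have hjac : (N * u ^ 2)⁻¹ = Real.exp (-(Real.log N + 2 * Real.log u)) := by
    rw [Real.exp_neg, Real.exp_add, Real.exp_log hN, ← Real.log_rpow hu,
      Real.exp_log (by positivity)]
    norm_num
  rw [hjac, ← cpow_intCast, ofReal_mul_I_cpow (by positivity), ofReal_mul_I_cpow (by positivity),
    ofReal_mul_I_cpow hu, ofReal_cpow_eq_exp hN, ofReal_cpow_eq_exp hN, neg_one_zpow_eq_exp,
    Real.log_inv, Real.log_mul hN.ne' hu.ne', ofReal_exp]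
  simp only [← exp_add, ← exp_neg]
  congr 1
  push_cast
  ring

theorem im_neg_one_div_ofReal_mul_pos {N : ℝ} (hN : 0 < N) {z : ℂ} (hz : 0 < z.im) :
    0 < (-1 / ((N : ℂ) * z)).im := by
  have hNz : 0 < ((N : ℂ) * z).im := by simpa using mul_pos hN hz
  rw [neg_div, one_div, neg_im, inv_im, neg_div, neg_neg]
  exact div_pos hNz (normSq_pos.mpr fun h => hNz.ne' (by simp [h]))

/-- `f |_α w_N = ε f` on the upper half-plane. -/
def IsFrickeEigenfunction (N : ℝ) (α : ℤ) (ε : ℂ) (f : ℂ → ℂ) : Prop :=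
  ∀ z : ℂ, 0 < z.im →
    (N : ℂ) ^ ((α : ℂ) / 2) * ((N : ℂ) * z) ^ (-α) * f (-1 / ((N : ℂ) * z)) = ε * f z

namespace IsFrickeEigenfunction

variable {N : ℝ} {α : ℤ} {ε : ℂ} {f : ℂ → ℂ}

theorem sq_mul (h : IsFrickeEigenfunction N α ε f) (hN : 0 < N) {z : ℂ} (hz : 0 < z.im) :
    ε ^ 2 * f z = (-1) ^ α * f z := by
  set w := -1 / ((N : ℂ) * z) with hw_def
  have hN0 : (N : ℂ) ≠ 0 := ofReal_ne_zero.mpr hN.ne'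
  have hz0 : z ≠ 0 := fun h => hz.ne' (by simp [h])
  have hzw : -1 / ((N : ℂ) * w) = z := by
    rw [hw_def]; field_simp
  have hprod : ((N : ℂ) * z) * ((N : ℂ) * w) = -N := by
    rw [hw_def]; field_simp
  have hhalf : (N : ℂ) ^ ((α : ℂ) / 2) * (N : ℂ) ^ ((α : ℂ) / 2) = (N : ℂ) ^ α := by
    rw [← cpow_add _ _ hN0, add_halves, cpow_intCast]
  have h1 := h z hz
  have h2 := h w (im_neg_one_div_ofReal_mul_pos hN hz)
  rw [hzw] at h2
  calc ε ^ 2 * f z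
      = (N : ℂ) ^ ((α : ℂ) / 2) * (N : ℂ) ^ ((α : ℂ) / 2) *
          (((N : ℂ) * z) * ((N : ℂ) * w)) ^ (-α) * f z := by
        rw [mul_zpow]
        linear_combination -ε * h1 - (N : ℂ) ^ ((α : ℂ) / 2) * ((N : ℂ) * z) ^ (-α) * h2
    _ = (-1) ^ α * f z := by
        rw [hprod, hhalf, neg_eq_neg_one_mul, mul_zpow, zpow_neg, zpow_neg, ← inv_zpow,
          inv_neg_one]
        field_simp

theorem smul_integrand_comp_inv (h : IsFrickeEigenfunction N α ε f) (hN : 0 < N)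
    (hε : ε ^ 2 = 1) (s : ℂ) {u : ℝ} (hu : 0 < u) :
    ((N * u ^ 2)⁻¹ : ℝ) • (f (((N * u)⁻¹ : ℝ) * I) * ((((N * u)⁻¹ : ℝ) : ℂ) * I) ^ (s - 1) * I)
      = exp (π * I * (s - α)) * (N : ℂ) ^ ((α : ℂ) / 2 - s) * ε *
          (f (u * I) * ((u : ℂ) * I) ^ ((α : ℂ) - s - 1) * I) := by
  have hN0 : (N : ℂ) ^ ((α : ℂ) / 2) ≠ 0 := by simp [cpow_eq_zero_iff, hN.ne']
  have hNu : (N : ℂ) * (u * I) = ((N * u : ℝ) : ℂ) * I := by push_cast; ring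
  have hw : -1 / ((N : ℂ) * (u * I)) = (((N * u)⁻¹ : ℝ) : ℂ) * I := by
    rw [hNu]; push_cast; field_simp; rw [I_sq]; ring
  have heig := h (u * I) (by simpa using hu)
  rw [hw, hNu] at heig
  have hfw : f ((((N * u)⁻¹ : ℝ) : ℂ) * I)
      = ((N : ℂ) ^ ((α : ℂ) / 2))⁻¹ * (((N * u : ℝ) : ℂ) * I) ^ α * (ε * f (u * I)) := by
    have hx : (((N * u : ℝ) : ℂ) * I) ^ α ≠ 0 := zpow_ne_zero α (by simp [hN.ne', hu.ne'])
    rw [← heig, zpow_neg, mul_mul_mul_comm, inv_mul_cancel_left₀ hN0, inv_mul_cancel_left₀ hx]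
  have hsign : (-1) ^ α * f (u * I) = f (u * I) := by
    rw [← sq_mul h hN (by simpa using hu), hε, one_mul]
  rw [real_smul, hfw]
  linear_combination (ε * f (u * I) * I) * fricke_factor_identity hN hu α s
    + exp (π * I * (s - α)) * (N : ℂ) ^ ((α : ℂ) / 2 - s) * ε *
        ((u : ℂ) * I) ^ ((α : ℂ) - s - 1) * I * hsign

end IsFrickeEigenfunction

theorem fricke_functional_equation_eigenform_general
    (N : ℕ) (hN : 0 < N) (α : ℤ) (ε : ℂ) (hε : ε = 1 ∨ ε = -1)
    (f : ℂ → ℂ)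
    (heigen : ∀ z : ℂ, 0 < z.im →
      ((N : ℂ)) ^ ((α : ℂ) / 2) * ((N : ℂ) * z) ^ (-α) * f (-1 / ((N : ℂ) * z)) = ε * f z)
    (s : ℂ) :
    -(∫ t in Set.Ioi (0 : ℝ),
        f ((t : ℂ) * Complex.I) * ((t : ℂ) * Complex.I) ^ (s - 1) * Complex.I)
      = Complex.exp (Real.pi * Complex.I * (s - α)) * ((N : ℂ)) ^ ((α : ℂ) / 2 - s) * ε *
          -(∫ t in Set.Ioi (0 : ℝ),
              f ((t : ℂ) * Complex.I) * ((t : ℂ) * Complex.I) ^ ((α : ℂ) - s - 1) *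
                Complex.I) := by
  have hfricke : IsFrickeEigenfunction N α ε f := fun z hz => by
    rw [ofReal_natCast]; exact heigen z hz
  have hε2 : ε ^ 2 = 1 := by rcases hε with rfl | rfl <;> norm_num
  have hNR : (0 : ℝ) < N := by exact_mod_cast hN
  rw [mul_neg, neg_inj, integral_Ioi_eq_integral_comp_inv_mul _ hNR, ← integral_const_mul]
  refine setIntegral_congr_fun measurableSet_Ioi fun u hu => ?_
  simpa using hfricke.smul_integrand_comp_inv hNR hε2 s hu

/-- Fricke functional equation for eigenfunctions: if f|_α w_N = ε f
with ε = ±1 and f decays exponentially at i∞ and at 0 along the imaginary axis, then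
Λ(s,f) = e^{iπ(s-α)} N^{α/2-s} ε Λ(α-s, f), where Λ(s,f) = ∫_{i∞}^0 f(z) z^{s-1} dz. -/
theorem fricke_functional_equation_eigenform
    (N : ℕ) (hN : 0 < N) (α : ℤ) (ε : ℂ) (hε : ε = 1 ∨ ε = -1)
    (f : ℂ → ℂ) (hf : DifferentiableOn ℂ f {w : ℂ | 0 < w.im})
    (heigen : ∀ z : ℂ, 0 < z.im →
      ((N : ℂ)) ^ ((α : ℂ) / 2) * ((N : ℂ) * z) ^ (-α) * f (-1 / ((N : ℂ) * z)) = ε * f z)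
    (hdecay : ∃ c C : ℝ, 0 < c ∧ 0 < C ∧ ∀ t : ℝ, 0 < t →
      ‖f ((t : ℂ) * Complex.I)‖ ≤ C * Real.exp (-c * t))
    (hdecay0 : ∃ c C : ℝ, 0 < c ∧ 0 < C ∧ ∀ t : ℝ, 0 < t →
      ‖f ((t : ℂ) * Complex.I)‖ ≤ C * Real.exp (-c / t))
    (s : ℂ) :
    -(∫ t in Set.Ioi (0 : ℝ),
        f ((t : ℂ) * Complex.I) * ((t : ℂ) * Complex.I) ^ (s - 1) * Complex.I)
      = Complex.exp (Real.pi * Complex.I * (s - α)) * ((N : ℂ)) ^ ((α : ℂ) / 2 - s) * ε *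
          -(∫ t in Set.Ioi (0 : ℝ),
              f ((t : ℂ) * Complex.I) * ((t : ℂ) * Complex.I) ^ ((α : ℂ) - s - 1) *
                Complex.I) :=
  fricke_functional_equation_eigenform_general N hN α ε hε f heigen s
end
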